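/- There exists an absolute constant n₀ ∈ ℕ such that the following holds for all n ≥ n₀. Let K be a class of functions [0,1] → [0,1], and let q₁ < q₂ < ⋯ < q_n be points of [1/4, 3/4] such that for every sign vector σ ∈ {−1, +1}ⁿ there exists κ ∈ K with sign₊(κ(qᵢ) − 1/2) = σᵢ for all i ∈ [n]. For a vector y = (y₁, …, y_n) ∈ {0,1}ⁿ, let J_y be the probability distribution on [0,1] × {0,1} in which p is uniform over {q₁, …, q_n} and the outcome equals yᵢ deterministically when p = qᵢ. If y₁, …, y_n are drawn independently with yᵢ ~ Bernoulli(qᵢ), then the probability that CDL_K(J_y) ≥ 1/8 is at least 5/6. -/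

import Mathlib

open MeasureTheory Set

noncomputable section

/-- Expected loss of prediction `p` when the outcome is `y ~ Bernoulli(q)`:
`ℓ(p,q) = q·ℓ(p,1) + (1−q)·ℓ(p,0)`. -/
def elos (ℓ : ℝ → ℝ → ℝ) (p q : ℝ) : ℝ := q * ℓ p 1 + (1 - q) * ℓ p 0

/-- A loss is proper if truthful prediction minimizes expected loss. -/
def IsProper (ℓ : ℝ → ℝ → ℝ) : Prop :=
  ∀ p ∈ Icc (0:ℝ) 1, ∀ q ∈ Icc (0:ℝ) 1, elos ℓ q q ≤ elos ℓ p q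

/-- The class `L*` of proper losses with `|ℓ(p,1) − ℓ(p,0)| ≤ 1`. -/
def Lstar (ℓ : ℝ → ℝ → ℝ) : Prop :=
  IsProper ℓ ∧ ∀ p ∈ Icc (0:ℝ) 1, |ℓ p 1 - ℓ p 0| ≤ 1

/-- Projection onto `[0,1]`. -/
def proj01 (x : ℝ) : ℝ := max 0 (min 1 x)

/-- Calibration decision loss of `J` relative to the post-processing class `K`:
`sup` over `ℓ ∈ L*` and `κ ∈ K` of `E[ℓ(p,y) − ℓ(κ(p),y)]`. -/
def CDL (K : Set (ℝ → ℝ)) (J : Measure (ℝ × ℝ)) : ℝ :=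
  sSup { x | ∃ ℓ κ, Lstar ℓ ∧ κ ∈ K ∧
    x = ∫ z, (ℓ z.1 z.2 - ℓ (κ z.1) z.2) ∂J }

/-- `sign_s(t)`: `+1` if `t > 0`, `−1` if `t < 0`, and `s` if `t = 0`. -/
def signS (s t : ℝ) : ℝ := if 0 < t then 1 else if t < 0 then -1 else s

/-- `sign₊ = sign_{+1}`. -/
def signP (t : ℝ) : ℝ := signS 1 t

/-- The V-shaped loss `ℓ_{v,s}(p,y) = −sign_s(p−v)·(y−v)`. -/
def vloss (v s : ℝ) : ℝ → ℝ → ℝ := fun p y => -(signS s (p - v)) * (y - v)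

/-- A valid post-processing class: maps `[0,1]` to `[0,1]`, contains the identity, and
is translation invariant. -/
def ValidClass (K : Set (ℝ → ℝ)) : Prop :=
  (∀ κ ∈ K, ∀ p ∈ Icc (0:ℝ) 1, κ p ∈ Icc (0:ℝ) 1) ∧
  ((fun p : ℝ => p) ∈ K) ∧
  (∀ s t : ℝ, ∀ κ ∈ K, (fun p : ℝ => proj01 (κ (proj01 (p + s)) + t)) ∈ K)

/-- Upper thresholds of a post-processing class. -/
def thr (K : Set (ℝ → ℝ)) : Set (ℝ → ℝ) :=
  { w | ∃ κ ∈ K, w = fun p => signP (κ p - 1/2) }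

/-- Modified thresholds: `thr(K)` together with all lower thresholds of the identity. -/
def thr' (K : Set (ℝ → ℝ)) : Set (ℝ → ℝ) :=
  thr K ∪ { w | ∃ v : ℝ, w = fun p => -signP (p - v) }

/-- Weight-restricted calibration error `CE_W(J) = sup_{w ∈ W} E[w(p)(y − p)]`. -/
def CE (W : Set (ℝ → ℝ)) (J : Measure (ℝ × ℝ)) : ℝ :=
  sSup { x | ∃ w ∈ W, x = ∫ z, w z.1 * (z.2 - z.1) ∂J }

/-- A probability distribution on `[0,1] × {0,1}`. -/
def IsPredDist (J : Measure (ℝ × ℝ)) : Prop :=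
  IsProbabilityMeasure J ∧ ∀ᵐ z ∂J, z.1 ∈ Icc (0:ℝ) 1 ∧ (z.2 = 0 ∨ z.2 = 1)

/-- The class `M₊` of nondecreasing post-processings `[0,1] → [0,1]`. -/
def Mplus : Set (ℝ → ℝ) :=
  { κ | (∀ p ∈ Icc (0:ℝ) 1, κ p ∈ Icc (0:ℝ) 1) ∧ MonotoneOn κ (Icc (0:ℝ) 1) }

/-- The Bernoulli distribution with parameter `p`, as a measure on `ℝ` over `{0,1}`. -/
def bern (p : ℝ) : Measure ℝ :=
  ENNReal.ofReal p • Measure.dirac (1:ℝ) + ENNReal.ofReal (1 - p) • Measure.dirac (0:ℝ)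

/-- The distribution `J_y` on `[0,1] × {0,1}`: `p` uniform over `{q₁,…,q_n}`, with
deterministic outcome `yᵢ` when `p = qᵢ`. -/
def empJ {n : ℕ} (q y : Fin n → ℝ) : Measure (ℝ × ℝ) :=
  (n : ENNReal)⁻¹ • ∑ i, Measure.dirac (q i, y i)


/-!
Given labels `y ∈ {0,1}ⁿ`, shattering provides `κ ∈ K` with `κ(qᵢ)` on the side of `1/2` given
by `yᵢ`. Under the V-shaped loss `ℓ_{1/2,+} ∈ L*` such a `κ` suffers loss exactly `-1/2` at every
point, while the forecast `qᵢ` suffers `-|qᵢ - 1/2| - sᵢ (yᵢ - qᵢ) ≥ -1/4 - sᵢ (yᵢ - qᵢ)`, where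
`sᵢ = sign₊(qᵢ - 1/2)`. Hence `CDL_K(J_y) ≥ 1/4 - Z/n` with `Z = ∑ sᵢ (yᵢ - qᵢ)`. Under the product
Bernoulli law `Z` is a sum of independent centred variables of variance at most `1/4`, so by
Chebyshev `P(|Z| ≥ n/8) ≤ 16/n ≤ 1/6` once `n ≥ 96`.
-/

open ProbabilityTheory

section Losses

lemma abs_signS_le_one {s : ℝ} (hs : |s| ≤ 1) (t : ℝ) : |signS s t| ≤ 1 := by
  unfold signS; split_ifs <;> simp [hs]

lemma signS_mul_self (s t : ℝ) : signS s t * t = |t| := by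
  unfold signS
  split_ifs with hpos hneg
  · rw [one_mul, abs_of_pos hpos]
  · rw [neg_one_mul, abs_of_neg hneg]
  · simp [le_antisymm (not_lt.1 hpos) (not_lt.1 hneg)]

lemma elos_vloss (v s p q : ℝ) : elos (vloss v s) p q = -signS s (p - v) * (q - v) := by
  unfold elos vloss; ring

lemma lstar_vloss (v : ℝ) {s : ℝ} (hs : |s| ≤ 1) : Lstar (vloss v s) := by
  refine ⟨fun p _ q _ ↦ ?_, fun p _ ↦ ?_⟩
  · rw [elos_vloss, elos_vloss, neg_mul, neg_mul, neg_le_neg_iff, signS_mul_self]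
    calc signS s (p - v) * (q - v) ≤ |signS s (p - v)| * |q - v| := by
          rw [← abs_mul]; exact le_abs_self _
      _ ≤ |q - v| := mul_le_of_le_one_left (abs_nonneg _) (abs_signS_le_one hs _)
  · have : vloss v s p 1 - vloss v s p 0 = -signS s (p - v) := by unfold vloss; ring
    rw [this, abs_neg]
    exact abs_signS_le_one hs _

/-- Compare `a` with the forecast `t` itself: properness at `t` bounds `ℓ t t ≤ ℓ b t`, and
properness at `a` together with `|ℓ(·,1) - ℓ(·,0)| ≤ 1` bounds `ℓ a t ≤ ℓ t t + 2`. -/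
lemma Lstar.sub_le_two {ℓ : ℝ → ℝ → ℝ} (h : Lstar ℓ) {a b t : ℝ}
    (ha : a ∈ Icc (0:ℝ) 1) (hb : b ∈ Icc (0:ℝ) 1) (ht : t = 0 ∨ t = 1) :
    ℓ a t - ℓ b t ≤ 2 := by
  obtain ⟨hproper, hdiff⟩ := h
  have hda := abs_le.1 (hdiff a ha)
  have ht01 : t ∈ Icc (0:ℝ) 1 := by rcases ht with rfl | rfl <;> norm_num
  have hdt := abs_le.1 (hdiff t ht01)
  have hbt := hproper b hb t ht01
  have hat := hproper t ht01 a ha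
  simp only [elos] at hbt hat
  rcases ht with rfl | rfl <;> nlinarith [ha.1, ha.2]

lemma quarter_sub_le_vloss_sub {q y k : ℝ} (hq : q ∈ Icc (1/4 : ℝ) (3/4)) (hy : y = 0 ∨ y = 1)
    (hk : signP (k - 1/2) = 2 * y - 1) :
    1/4 - signP (q - 1/2) * (y - q) ≤ vloss (1/2) 1 q y - vloss (1/2) 1 k y := by
  have hsq := signS_mul_self 1 (q - 1/2)
  have habs : |q - 1/2| ≤ 1/4 := abs_le.2 ⟨by linarith [hq.1], by linarith [hq.2]⟩
  unfold vloss
  rw [show signS 1 (k - 1/2) = 2 * y - 1 from hk]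
  rcases hy with rfl | rfl <;> unfold signP at * <;> nlinarith

end Losses

section Bernoulli

variable {p : ℝ}

lemma bern_eq_bernoulliMeasure (hp : p ∈ Icc (0 : ℝ) 1) :
    bern p = bernoulliMeasure 1 0 ⟨p, hp⟩ := by
  rw [bern, bernoulliMeasure_def]
  congr 2 <;> exact ENNReal.ofReal_eq_coe_nnreal _

instance (p : ℝ) : IsFiniteMeasure (bern p) :=
  ⟨by simp [bern]⟩

lemma isProbabilityMeasure_bern (hp : p ∈ Icc (0 : ℝ) 1) : IsProbabilityMeasure (bern p) := by
  rw [bern_eq_bernoulliMeasure hp]; infer_instance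

lemma ae_bern (hp : p ∈ Icc (0 : ℝ) 1) : ∀ᵐ t ∂bern p, t = 1 ∨ t = 0 := by
  change {t : ℝ | t = 1 ∨ t = 0} ∈ _
  rw [bern_eq_bernoulliMeasure hp, mem_ae_iff]
  exact bernoulliMeasure_apply_of_notMem_of_notMem _ (Set.toFinite {1, 0}).measurableSet.compl
    (by simp) (by simp)

lemma integral_bern (hp : p ∈ Icc (0 : ℝ) 1) (f : ℝ → ℝ) :
    ∫ t, f t ∂bern p = p * f 1 + (1 - p) * f 0 := by
  simp [bern_eq_bernoulliMeasure hp, integral_bernoulliMeasure]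

lemma memLp_two_bern (hp : p ∈ Icc (0 : ℝ) 1) (f : ℝ → ℝ) : MemLp f 2 (bern p) := by
  rw [bern_eq_bernoulliMeasure hp]
  exact (memLp_two_iff_integrable_sq (integrable_bernoulliMeasure 1 0 _ f).1).2
    (integrable_bernoulliMeasure 1 0 _ _)

lemma integral_mul_sub_bern (hp : p ∈ Icc (0 : ℝ) 1) (s : ℝ) :
    ∫ t, s * (t - p) ∂bern p = 0 := by
  rw [integral_bern hp]; ring

lemma variance_mul_sub_bern_le (hp : p ∈ Icc (0 : ℝ) 1) {s : ℝ} (hs : |s| ≤ 1) :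
    Var[fun t ↦ s * (t - p); bern p] ≤ 1/4 := by
  have := isProbabilityMeasure_bern hp
  have hs2 := (sq_le_one_iff_abs_le_one s).2 hs
  refine (variance_le_expectation_sq (memLp_two_bern hp _).1).trans ?_
  simp only [Pi.pow_apply, integral_bern hp]
  nlinarith [hp.1, hp.2, sq_nonneg (p - 1/2), mul_nonneg hp.1 (sub_nonneg.2 hp.2)]

lemma ae_pi_bern {n : ℕ} {q : Fin n → ℝ} (hq : ∀ i, q i ∈ Icc (0:ℝ) 1) :
    ∀ᵐ y ∂Measure.pi (fun i ↦ bern (q i)), ∀ i, y i = 0 ∨ y i = 1 :=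
  ae_all_iff.2 fun i ↦
    ((Measure.tendsto_eval_ae_ae (μ := fun i ↦ bern (q i)) (i := i)).eventually
      (ae_bern (hq i))).mono fun _ h ↦ h.symm

end Bernoulli

lemma measure_pi_abs_sum_ge_le {ι : Type*} [Fintype ι] {Ω : ι → Type*}
    {mΩ : ∀ i, MeasurableSpace (Ω i)} {μ : (i : ι) → Measure (Ω i)}
    [∀ i, IsProbabilityMeasure (μ i)] {X : Π i, Ω i → ℝ} (hX : ∀ i, MemLp (X i) 2 (μ i))
    (hmean : ∀ i, ∫ ω, X i ω ∂μ i = 0) {v c : ℝ} (hvar : ∀ i, Var[X i; μ i] ≤ v) (hc : 0 < c) :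
    Measure.pi μ {ω | c ≤ |∑ i, X i (ω i)|} ≤ ENNReal.ofReal (Fintype.card ι * v / c ^ 2) := by
  have hXω : ∀ i, MemLp (fun ω : Π i, Ω i ↦ X i (ω i)) 2 (Measure.pi μ) := fun i ↦
    (hX i).comp_measurePreserving (measurePreserving_eval μ i)
  have hmean_sum : ∫ ω, ∑ i, X i (ω i) ∂Measure.pi μ = 0 := by
    rw [integral_finsetSum _ fun i _ ↦ (hXω i).integrable one_le_two]
    exact Finset.sum_eq_zero fun i _ ↦ by rw [integral_comp_eval (hX i).aestronglyMeasurable, hmean]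
  have hvar_sum : Var[∑ i, fun ω ↦ X i (ω i); Measure.pi μ] ≤ Fintype.card ι * v := by
    rw [variance_sum_pi hX]
    calc ∑ i, Var[X i; μ i] ≤ ∑ _i : ι, v := Finset.sum_le_sum fun i _ ↦ hvar i
      _ = Fintype.card ι * v := by simp
  calc Measure.pi μ {ω | c ≤ |∑ i, X i (ω i)|}
      ≤ ENNReal.ofReal (Var[∑ i, fun ω ↦ X i (ω i); Measure.pi μ] / c ^ 2) := by
        simpa [Finset.sum_apply, hmean_sum] using
          meas_ge_le_variance_div_sq (memLp_finsetSum' Finset.univ fun i _ ↦ hXω i) hc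
    _ ≤ ENNReal.ofReal (Fintype.card ι * v / c ^ 2) := by gcongr

lemma one_sub_measure_le_of_ae_compl {Ω : Type*} [MeasurableSpace Ω] {μ : Measure Ω}
    [IsProbabilityMeasure μ] {s t : Set Ω} (hs : MeasurableSet s) (hst : ∀ᵐ ω ∂μ, ω ∉ s → ω ∈ t) :
    1 - μ s ≤ μ t := by
  rw [← prob_compl_eq_one_sub hs]
  exact measure_mono_ae hst

section RandomLabels

variable {n : ℕ}

def signedResidual (q y : Fin n → ℝ) : ℝ :=
  ∑ i, signP (q i - 1/2) * (y i - q i)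

@[fun_prop]
lemma measurable_signedResidual (q : Fin n → ℝ) : Measurable (signedResidual q) := by
  unfold signedResidual; fun_prop

lemma measure_abs_signedResidual_ge_le {q : Fin n → ℝ} (hq : ∀ i, q i ∈ Icc (0:ℝ) 1) {c : ℝ}
    (hc : 0 < c) :
    Measure.pi (fun i ↦ bern (q i)) {y | c ≤ |signedResidual q y|}
      ≤ ENNReal.ofReal (n * (1/4) / c ^ 2) := by
  have := fun i ↦ isProbabilityMeasure_bern (hq i)
  simpa [signedResidual] using measure_pi_abs_sum_ge_le (X := fun i t ↦ signP (q i - 1/2) * (t - q i))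
    (fun i ↦ memLp_two_bern (hq i) _) (fun i ↦ integral_mul_sub_bern (hq i) _)
    (fun i ↦ variance_mul_sub_bern_le (hq i) (abs_signS_le_one (by norm_num) _)) hc

lemma integral_empJ (q y : Fin n → ℝ) (f : ℝ × ℝ → ℝ) :
    ∫ z, f z ∂empJ q y = (n:ℝ)⁻¹ * ∑ i, f (q i, y i) := by
  rw [empJ, integral_smul_measure,
    integral_finsetSum_measure fun i _ ↦ integrable_dirac (by simp)]
  simp_rw [integral_dirac]
  rw [smul_eq_mul, ENNReal.toReal_inv, ENNReal.toReal_natCast]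

variable {K : Set (ℝ → ℝ)} (hK : ∀ κ ∈ K, ∀ p ∈ Icc (0:ℝ) 1, κ p ∈ Icc (0:ℝ) 1)
include hK

lemma bddAbove_CDL_empJ {q y : Fin n → ℝ} (hq : ∀ i, q i ∈ Icc (0:ℝ) 1)
    (hy : ∀ i, y i = 0 ∨ y i = 1) :
    BddAbove {x | ∃ ℓ κ, Lstar ℓ ∧ κ ∈ K ∧ x = ∫ z, (ℓ z.1 z.2 - ℓ (κ z.1) z.2) ∂empJ q y} := by
  refine ⟨2, ?_⟩
  rintro x ⟨ℓ, κ, hℓ, hκ, rfl⟩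
  rw [integral_empJ]
  calc (n:ℝ)⁻¹ * ∑ i, (ℓ (q i) (y i) - ℓ (κ (q i)) (y i))
      ≤ (n:ℝ)⁻¹ * ∑ _i : Fin n, 2 := by
        gcongr with i
        exact hℓ.sub_le_two (hq i) (hK κ hκ _ (hq i)) (hy i)
    _ = (n:ℝ)⁻¹ * n * 2 := by simp [mul_assoc]
    _ ≤ 2 := mul_le_of_le_one_left zero_le_two inv_mul_le_one

lemma quarter_sub_signedResidual_div_le_CDL (hn : n ≠ 0) {q y : Fin n → ℝ}
    (hq : ∀ i, q i ∈ Icc (1/4 : ℝ) (3/4))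
    (hshatter : ∀ σ : Fin n → ℝ, (∀ i, σ i = 1 ∨ σ i = -1) →
      ∃ κ ∈ K, ∀ i, signP (κ (q i) - 1/2) = σ i)
    (hy : ∀ i, y i = 0 ∨ y i = 1) :
    1/4 - signedResidual q y / n ≤ CDL K (empJ q y) := by
  obtain ⟨κ, hκ, hκy⟩ := hshatter (fun i ↦ 2 * y i - 1)
    (fun i ↦ by rcases hy i with h | h <;> norm_num [h])
  have hq01 : ∀ i, q i ∈ Icc (0:ℝ) 1 := fun i ↦ ⟨by linarith [(hq i).1], by linarith [(hq i).2]⟩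
  refine le_csSup_of_le (bddAbove_CDL_empJ hK hq01 hy)
    ⟨vloss (1/2) 1, κ, lstar_vloss _ (by norm_num), hκ, rfl⟩ ?_
  rw [integral_empJ]
  calc 1/4 - signedResidual q y / n
      = (n:ℝ)⁻¹ * ∑ i, (1/4 - signP (q i - 1/2) * (y i - q i)) := by
        simp only [signedResidual, Finset.sum_sub_distrib, Finset.sum_const, Finset.card_univ,
          Fintype.card_fin, nsmul_eq_mul]
        rw [mul_sub, inv_mul_cancel_left₀ (by exact_mod_cast hn), inv_mul_eq_div]
    _ ≤ _ := mul_le_mul_of_nonneg_left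
        (Finset.sum_le_sum fun i _ ↦ quarter_sub_le_vloss_sub (hq i) (hy i) (hκy i))
        (by positivity)

end RandomLabels

/-- for a class `K` whose thresholds shatter `q₁ < ⋯ < q_n ∈ [1/4,3/4]`,
with `yᵢ ~ Bernoulli(qᵢ)` independent, `CDL_K(J_y) ≥ 1/8` with probability `≥ 5/6`. -/
theorem random_labels_large_CDL :
    ∃ n₀ : ℕ, ∀ n : ℕ, n₀ ≤ n → ∀ K : Set (ℝ → ℝ),
      (∀ κ ∈ K, ∀ p ∈ Icc (0:ℝ) 1, κ p ∈ Icc (0:ℝ) 1) →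
      ∀ q : Fin n → ℝ, StrictMono q → (∀ i, q i ∈ Icc (1/4 : ℝ) (3/4)) →
      (∀ σ : Fin n → ℝ, (∀ i, σ i = 1 ∨ σ i = -1) →
        ∃ κ ∈ K, ∀ i, signP (κ (q i) - 1/2) = σ i) →
      (5/6 : ENNReal) ≤
        Measure.pi (fun i : Fin n => bern (q i)) {y | 1/8 ≤ CDL K (empJ q y)} := by
  refine ⟨96, fun n hn K hK q _ hq hshatter ↦ ?_⟩
  have hnR : (96:ℝ) ≤ n := by exact_mod_cast hn
  have hq01 : ∀ i, q i ∈ Icc (0:ℝ) 1 := fun i ↦ ⟨by linarith [(hq i).1], by linarith [(hq i).2]⟩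
  have := fun i ↦ isProbabilityMeasure_bern (hq01 i)
  set B := {y : Fin n → ℝ | (n:ℝ)/8 ≤ |signedResidual q y|}
  have hB : Measure.pi (fun i ↦ bern (q i)) B ≤ ENNReal.ofReal (1/6) := by
    refine (measure_abs_signedResidual_ge_le hq01 (by positivity)).trans
      (ENNReal.ofReal_le_ofReal ?_)
    rw [div_le_iff₀ (by positivity)]
    nlinarith
  have hgood : ∀ᵐ y ∂Measure.pi (fun i ↦ bern (q i)), y ∉ B → 1/8 ≤ CDL K (empJ q y) := by
    filter_upwards [ae_pi_bern hq01] with y hy hyB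
    have hCDL := quarter_sub_signedResidual_div_le_CDL hK (by omega) hq hshatter hy
    have : signedResidual q y / n < 1/8 := by
      rw [div_lt_iff₀ (by positivity)]
      have hyB : |signedResidual q y| < n/8 := not_le.1 hyB
      linarith [le_abs_self (signedResidual q y)]
    linarith
  calc (5/6 : ENNReal) = 1 - ENNReal.ofReal (1/6) := by
        rw [← ENNReal.ofReal_one, ← ENNReal.ofReal_sub _ (by norm_num),
          show (1:ℝ) - 1/6 = 5/6 by norm_num, ENNReal.ofReal_div_of_pos (by norm_num)]
        simp
    _ ≤ 1 - Measure.pi (fun i ↦ bern (q i)) B := tsub_le_tsub_left hB 1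
    _ ≤ _ := one_sub_measure_le_of_ae_compl (measurableSet_le (by fun_prop) (by fun_prop)) hgood
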